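/- arXiv:2501.09516 — 2 statements merged into one kernel-verified Lean document; each statement's English description precedes it below -/
import Mathlib

section
/- Let X ∈ St(n,r), let f : ℝ^{n×r} → ℝ be differentiable at X, let h : ℝ^{n×r} → ℝ be convex, and let B : ℝ^{n×r} → ℝ^{n×r} be a linear map that is self-adjoint for the trace inner product, maps T_X into itself, and is positive definite on T_X. If V* minimizes φ(V) := ⟨∇f(X),V⟩ + (1/2)⟨V,BV⟩ + h(X+V) over the subspace T_X, then for every α ∈ [0,1] one has φ(αV*) − φ(0) ≤ (α(α−2)/2)⟨V*, B V*⟩. -/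
open Matrix

/-- The trace inner product `⟨A, B⟩ = tr(AᵀB)` on `ℝ^{n×r}`. -/
noncomputable def tinner {n r : ℕ} (A B : Matrix (Fin n) (Fin r) ℝ) : ℝ := (Aᵀ * B).trace

/-- `V` belongs to the tangent space `T_X = {V : VᵀX + XᵀV = 0}` of the Stiefel manifold at `X`. -/
def IsTangent {n r : ℕ} (X V : Matrix (Fin n) (Fin r) ℝ) : Prop := Vᵀ * X + Xᵀ * V = 0

attribute [local instance] Matrix.frobeniusNormedAddCommGroup Matrix.frobeniusNormedSpace

/-!
Along the ray `t ↦ t • V*` the objective is `φ (t • V*) = p t + Q t² / 2`, where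
`Q = ⟨V*, B V*⟩` and `p t = t ⟨G, V*⟩ + h (X + t • V*)` is convex. Since `T_X` is closed under
scaling, `t = 1` minimizes this on `[0, 1]`. Comparing with the chord of `p` at `t < 1` gives
`p 1 - p 0 ≤ -(1 + t) Q / 2`, hence `p 1 - p 0 ≤ -Q` as `t → 1`; the chord of `p` at `α`
then yields the bound.
-/

open Set Filter Topology

lemma tinner_smul_left {n r : ℕ} (s : ℝ) (A B : Matrix (Fin n) (Fin r) ℝ) :
    tinner (s • A) B = s * tinner A B := by
  simp [tinner, Matrix.transpose_smul, Matrix.smul_mul, Matrix.trace_smul, smul_eq_mul]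

lemma tinner_smul_right {n r : ℕ} (s : ℝ) (A B : Matrix (Fin n) (Fin r) ℝ) :
    tinner A (s • B) = s * tinner A B := by
  simp [tinner, Matrix.mul_smul, Matrix.trace_smul, smul_eq_mul]

lemma IsTangent.smul {n r : ℕ} {X V : Matrix (Fin n) (Fin r) ℝ} (hV : IsTangent X V) (s : ℝ) :
    IsTangent X (s • V) := by
  unfold IsTangent at *
  rw [Matrix.transpose_smul, Matrix.smul_mul, Matrix.mul_smul, ← smul_add, hV, smul_zero]

lemma ConvexOn.comp_affine_line {E : Type*} [AddCommGroup E] [Module ℝ E] {h : E → ℝ}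
    (hh : ConvexOn ℝ univ h) (X V : E) : ConvexOn ℝ univ fun α : ℝ => h (X + α • V) :=
  (hh.translate_right X).comp_linearMap (LinearMap.toSpanSingleton ℝ E V)

lemma ConvexOn.le_chord_of_mem_Icc {p : ℝ → ℝ} (hp : ConvexOn ℝ (Icc 0 1) p) {t : ℝ}
    (ht : t ∈ Icc (0 : ℝ) 1) : p t ≤ t * p 1 + (1 - t) * p 0 := by
  simpa using hp.2 (right_mem_Icc.2 zero_le_one) (left_mem_Icc.2 zero_le_one) ht.1
    (sub_nonneg.2 ht.2) (add_sub_cancel t 1)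

lemma ConvexOn.sub_le_neg_of_le_add_sq {p : ℝ → ℝ} {Q : ℝ} (hp : ConvexOn ℝ (Icc 0 1) p)
    (hmin : ∀ t ∈ Ico (0 : ℝ) 1, p 1 + Q / 2 ≤ p t + Q * t ^ 2 / 2) :
    p 1 - p 0 ≤ -Q := by
  have hslope : ∀ t ∈ Ico (0 : ℝ) 1, p 1 - p 0 ≤ -((1 + t) / 2 * Q) := by
    intro t ⟨ht0, ht1⟩
    have hchord := hp.le_chord_of_mem_Icc ⟨ht0, ht1.le⟩
    have hpos : 0 < 1 - t := by linarith
    -- with minimality at `1`: `(1 - t) (p 1 - p 0) ≤ -(1 - t) (1 + t) Q / 2`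
    have hmin_t := hmin t ⟨ht0, ht1⟩
    nlinarith
  have hlim : Tendsto (fun t : ℝ => -((1 + t) / 2 * Q)) (𝓝[<] 1) (𝓝 (-Q)) := by
    have : Continuous fun t : ℝ => -((1 + t) / 2 * Q) := by fun_prop
    convert (this.tendsto 1).mono_left nhdsWithin_le_nhds using 2
    ring
  refine ge_of_tendsto hlim ?_
  filter_upwards [Ico_mem_nhdsLT (zero_lt_one' ℝ)] with t ht using hslope t ht

lemma ConvexOn.add_sq_sub_le_of_le_add_sq {p : ℝ → ℝ} {Q : ℝ} (hp : ConvexOn ℝ (Icc 0 1) p)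
    (hmin : ∀ t ∈ Ico (0 : ℝ) 1, p 1 + Q / 2 ≤ p t + Q * t ^ 2 / 2) {α : ℝ}
    (hα : α ∈ Icc (0 : ℝ) 1) :
    p α + Q * α ^ 2 / 2 - p 0 ≤ α * (α - 2) / 2 * Q := by
  have hchord := hp.le_chord_of_mem_Icc hα
  have hslope := mul_le_mul_of_nonneg_left (hp.sub_le_neg_of_le_add_sq hmin) hα.1
  nlinarith

theorem stmt1_general {n r : ℕ} (X : Matrix (Fin n) (Fin r) ℝ)
    (h : Matrix (Fin n) (Fin r) ℝ → ℝ)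
    -- `f` is differentiable at `X` with (Euclidean) gradient `G = ∇f(X)`
    (G : Matrix (Fin n) (Fin r) ℝ)
    -- `h` is convex
    (hconv : ConvexOn ℝ Set.univ h)
    (B : Matrix (Fin n) (Fin r) ℝ →ₗ[ℝ] Matrix (Fin n) (Fin r) ℝ)
    -- the objective `φ(V) = ⟨∇f(X),V⟩ + (1/2)⟨V,BV⟩ + h(X+V)`
    (φ : Matrix (Fin n) (Fin r) ℝ → ℝ)
    (hφ : ∀ V, φ V = tinner G V + (1 / 2) * tinner V (B V) + h (X + V))
    -- `V*` minimizes `φ` over `T_X`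
    (Vs : Matrix (Fin n) (Fin r) ℝ) (hVs : IsTangent X Vs)
    (hmin : ∀ V, IsTangent X V → φ Vs ≤ φ V) :
    ∀ α : ℝ, α ∈ Set.Icc (0 : ℝ) 1 →
      φ (α • Vs) - φ 0 ≤ α * (α - 2) / 2 * tinner Vs (B Vs) := by
  intro α hα
  set Q := tinner Vs (B Vs)
  set p : ℝ → ℝ := fun t => h (X + t • Vs) + t * tinner G Vs with hp_def
  have hφ_ray : ∀ t : ℝ, φ (t • Vs) = p t + Q * t ^ 2 / 2 := fun t => by
    simp only [hφ, hp_def, tinner_smul_left, map_smul, tinner_smul_right]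
    ring
  have hφ_Vs : φ Vs = p 1 + Q / 2 := by simpa using hφ_ray 1
  have hp : ConvexOn ℝ univ p :=
    (hconv.comp_affine_line X Vs).add
      ((LinearMap.toSpanSingleton ℝ ℝ (tinner G Vs)).convexOn convex_univ)
  have hmin_ray : ∀ t ∈ Ico (0 : ℝ) 1, p 1 + Q / 2 ≤ p t + Q * t ^ 2 / 2 := fun t _ =>
    hφ_Vs ▸ hφ_ray t ▸ hmin _ (hVs.smul t)
  have hbound :=
    (hp.subset (subset_univ _) (convex_Icc 0 1)).add_sq_sub_le_of_le_add_sq hmin_ray hα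
  rw [← zero_smul ℝ Vs, hφ_ray, hφ_ray]
  simpa using hbound

theorem stmt1 {n r : ℕ} (X : Matrix (Fin n) (Fin r) ℝ) (hX : Xᵀ * X = 1)
    (f h : Matrix (Fin n) (Fin r) ℝ → ℝ)
    -- `f` is differentiable at `X` with (Euclidean) gradient `G = ∇f(X)`
    (G : Matrix (Fin n) (Fin r) ℝ) (Lf : Matrix (Fin n) (Fin r) ℝ →L[ℝ] ℝ)
    (hf : HasFDerivAt f Lf X) (hGrad : ∀ V, Lf V = tinner G V)
    -- `h` is convex
    (hconv : ConvexOn ℝ Set.univ h)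
    -- `B` is linear, self-adjoint for the trace inner product, maps `T_X` into itself,
    -- and is positive definite on `T_X`
    (B : Matrix (Fin n) (Fin r) ℝ →ₗ[ℝ] Matrix (Fin n) (Fin r) ℝ)
    (hBsa : ∀ U V, tinner U (B V) = tinner (B U) V)
    (hBtan : ∀ V, IsTangent X V → IsTangent X (B V))
    (hBpos : ∀ V, IsTangent X V → V ≠ 0 → 0 < tinner V (B V))
    -- the objective `φ(V) = ⟨∇f(X),V⟩ + (1/2)⟨V,BV⟩ + h(X+V)`
    (φ : Matrix (Fin n) (Fin r) ℝ → ℝ)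
    (hφ : ∀ V, φ V = tinner G V + (1 / 2) * tinner V (B V) + h (X + V))
    -- `V*` minimizes `φ` over `T_X`
    (Vs : Matrix (Fin n) (Fin r) ℝ) (hVs : IsTangent X Vs)
    (hmin : ∀ V, IsTangent X V → φ Vs ≤ φ V) :
    ∀ α : ℝ, α ∈ Set.Icc (0 : ℝ) 1 →
      φ (α • Vs) - φ 0 ≤ α * (α - 2) / 2 * tinner Vs (B Vs) :=
  stmt1_general X h G hconv B φ hφ Vs hVs hmin
end

section
/- Let f : ℝ^{n×r} → ℝ be continuously differentiable with L-Lipschitz gradient and h : ℝ^{n×r} → ℝ convex and L_h-Lipschitz; set F := f + h. Let 0 < κ₁ ≤ κ₂, σ ∈ (0,1), c₀ > 0, M₁ > 0, and let m be a nonnegative integer. Suppose sequences X_k ∈ St(n,r), V_k ∈ T_{X_k}, α_k ∈ [c₀,1], and linear maps B_k : ℝ^{n×r} → ℝ^{n×r}, self-adjoint for the trace inner product and mapping T_{X_k} into itself, satisfy for all k: (i) κ₁‖V‖² ≤ ⟨V, B_k V⟩ ≤ κ₂‖V‖² for all V ∈ T_{X_k}; (ii) V_k minimizes φ_k(V) :=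 ⟨∇f(X_k),V⟩ + (1/2)⟨V, B_k V⟩ + h(X_k+V) over T_{X_k}; (iii) ‖X_{k+1} − X_k‖ ≤ M₁ α_k ‖V_k‖; (iv) F(X_{k+1}) ≤ max_{max(k−m,0) ≤ j ≤ k} F(X_j) − (σ/2) α_k ⟨V_k, B_k V_k⟩. Then V_k → 0 and the sequence F(X_k) converges. -/
/-!
The reference values `M_k = max_{k-m ≤ j ≤ k} F(X_j)` are nonincreasing, and bounded below because
`F` is Lipschitz on the bounded Stiefel manifold; let `l` be their limit. With
`d_k = (σ/2) α_k ⟨V_k, B_k V_k⟩ ≥ (σ/2) c₀ κ₁ ‖V_k‖²`, (iii) and the Lipschitz bound give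
`(F(X_{k+1}) - F(X_k))² ≤ C d_k`. Let `ℓ(k) ∈ [k-m, k]` attain `M_k`. Sufficient decrease gives
`d_{ℓ(k)-j-1} ≤ M_{k-m-j-1} - F(X_{ℓ(k)-j}) → 0` as soon as `F(X_{ℓ(k)-j}) → l`, and then
`F(X_{ℓ(k)-j-1}) → l` as well; by induction on `j ≤ m` this reaches every index, so `F(X_k) → l`,
hence `d_k ≤ M_k - F(X_{k+1}) → 0` and `V_k → 0`.
-/

open Matrix Filter

-- The norm `‖·‖` (and the topology) below come from the Frobenius norm,
-- associated to the trace inner product.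
attribute [local instance] Matrix.frobeniusNormedAddCommGroup Matrix.frobeniusNormedSpace

open Topology

open WithLp in
lemma tinner_eq_inner {n r : ℕ} (A B : Matrix (Fin n) (Fin r) ℝ) :
    tinner A B = inner ℝ (toLp 2 fun i => toLp 2 (A i)) (toLp 2 fun i => toLp 2 (B i)) := by
  simp only [tinner, trace, diag_apply, Matrix.mul_apply, transpose_apply, PiLp.inner_apply,
    RCLike.inner_apply, Real.ringHom_apply, mul_comm]
  exact Finset.sum_comm

open WithLp in
lemma norm_eq_norm_toLp {n r : ℕ} (A : Matrix (Fin n) (Fin r) ℝ) :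
    ‖A‖ = ‖(toLp 2 fun i => toLp 2 (A i) : WithLp 2 (Fin n → WithLp 2 (Fin r → ℝ)))‖ := rfl

lemma tinner_self {n r : ℕ} (A : Matrix (Fin n) (Fin r) ℝ) : tinner A A = ‖A‖ ^ 2 := by
  rw [tinner_eq_inner, norm_eq_norm_toLp, real_inner_self_eq_norm_sq]

lemma abs_tinner_le {n r : ℕ} (A B : Matrix (Fin n) (Fin r) ℝ) :
    |tinner A B| ≤ ‖A‖ * ‖B‖ := by
  rw [tinner_eq_inner, norm_eq_norm_toLp, norm_eq_norm_toLp B]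
  exact abs_real_inner_le_norm _ _

lemma norm_eq_sqrt_of_transpose_mul_self_eq_one {n r : ℕ} {X : Matrix (Fin n) (Fin r) ℝ}
    (hX : Xᵀ * X = 1) : ‖X‖ = √r := by
  rw [← Real.sqrt_sq (norm_nonneg X), ← tinner_self, tinner, hX, Matrix.trace_one,
    Fintype.card_fin]

lemma abs_sub_le_of_hasFDerivAt_tinner {n r : ℕ} {f : Matrix (Fin n) (Fin r) ℝ → ℝ}
    {g : Matrix (Fin n) (Fin r) ℝ → Matrix (Fin n) (Fin r) ℝ}
    {Lf : Matrix (Fin n) (Fin r) ℝ → (Matrix (Fin n) (Fin r) ℝ →L[ℝ] ℝ)}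
    (hf : ∀ Z, HasFDerivAt f (Lf Z) Z) (hGrad : ∀ Z V, Lf Z V = tinner (g Z) V) {L R : ℝ}
    (hLipg : ∀ A B, ‖g A - g B‖ ≤ L * ‖A - B‖) {A B : Matrix (Fin n) (Fin r) ℝ}
    (hA : ‖A‖ ≤ R) (hB : ‖B‖ ≤ R) : |f A - f B| ≤ (‖g 0‖ + |L| * R) * ‖A - B‖ := by
  -- `Lf Z` is continuous for the product topology on matrices, which agrees with the Frobenius
  -- one only after unfolding, so the operator norm has to be named explicitly.
  have hgrad_le : ∀ Z ∈ Metric.closedBall 0 R,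
      @Norm.norm _ (ContinuousLinearMap.hasOpNorm (E := Matrix (Fin n) (Fin r) ℝ)) (Lf Z) ≤
        ‖g 0‖ + |L| * R := by
    intro Z hZ
    rw [mem_closedBall_zero_iff] at hZ
    have hgZ : ‖g Z‖ ≤ ‖g 0‖ + |L| * R := by
      have := hLipg Z 0
      rw [sub_zero] at this
      nlinarith [norm_le_insert' (g Z) (g 0), le_abs_self L, abs_nonneg L, norm_nonneg Z]
    refine ContinuousLinearMap.opNorm_le_bound _ ((norm_nonneg _).trans hgZ) fun W => ?_
    erw [hGrad, Real.norm_eq_abs]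
    exact (abs_tinner_le _ _).trans (mul_le_mul_of_nonneg_right hgZ (norm_nonneg W))
  simpa only [Real.norm_eq_abs] using
    (convex_closedBall 0 R).norm_image_sub_le_of_norm_hasFDerivWithin_le
      (fun Z _ => (hf Z).hasFDerivWithinAt) hgrad_le (mem_closedBall_zero_iff.2 hB)
      (mem_closedBall_zero_iff.2 hA)

lemma abs_add_sub_le_of_hasFDerivAt_tinner {n r : ℕ} {f h : Matrix (Fin n) (Fin r) ℝ → ℝ}
    {g : Matrix (Fin n) (Fin r) ℝ → Matrix (Fin n) (Fin r) ℝ}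
    {Lf : Matrix (Fin n) (Fin r) ℝ → (Matrix (Fin n) (Fin r) ℝ →L[ℝ] ℝ)}
    (hf : ∀ Z, HasFDerivAt f (Lf Z) Z) (hGrad : ∀ Z V, Lf Z V = tinner (g Z) V) {L Lh R : ℝ}
    (hLipg : ∀ A B, ‖g A - g B‖ ≤ L * ‖A - B‖) (hLiph : ∀ A B, |h A - h B| ≤ Lh * ‖A - B‖)
    {A B : Matrix (Fin n) (Fin r) ℝ} (hA : ‖A‖ ≤ R) (hB : ‖B‖ ≤ R) :
    |(f A + h A) - (f B + h B)| ≤ (‖g 0‖ + |L| * R + |Lh|) * ‖A - B‖ := by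
  have hfAB := abs_sub_le_of_hasFDerivAt_tinner hf hGrad hLipg hA hB
  have hhAB := (hLiph A B).trans (mul_le_mul_of_nonneg_right (le_abs_self Lh) (norm_nonneg _))
  rw [add_sub_add_comm]
  linarith [abs_add_le (f A - f B) (h A - h B)]

lemma sq_le_div_mul_of_abs_le_mul {x v C c d : ℝ} (hc : 0 < c) (hx : |x| ≤ C * v)
    (hv : c * v ^ 2 ≤ d) : x ^ 2 ≤ C ^ 2 / c * d := by
  calc x ^ 2 = |x| ^ 2 := (sq_abs x).symm
    _ ≤ (C * v) ^ 2 := pow_le_pow_left₀ (abs_nonneg x) hx 2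
    _ = C ^ 2 / c * (c * v ^ 2) := by field_simp
    _ ≤ C ^ 2 / c * d := by gcongr

lemma mul_mul_sq_le_mul_mul {a c₀ α κ q v : ℝ} (ha : 0 ≤ a) (hc₀ : 0 ≤ c₀) (hα : c₀ ≤ α)
    (hκ : 0 ≤ κ) (hq : κ * v ^ 2 ≤ q) : a * c₀ * κ * v ^ 2 ≤ a * α * q := by
  calc a * c₀ * κ * v ^ 2 = a * c₀ * (κ * v ^ 2) := by ring
    _ ≤ a * α * q := by
      have hα0 : 0 ≤ α := hc₀.trans hα
      exact mul_le_mul (by gcongr) hq (by positivity) (by positivity)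

lemma bddBelow_range_of_abs_sub_le {F : ℕ → ℝ} {C : ℝ} (h : ∀ k, |F k - F 0| ≤ C) :
    BddBelow (Set.range F) := by
  refine ⟨F 0 - C, ?_⟩
  rintro _ ⟨k, rfl⟩
  linarith [neg_abs_le (F k - F 0), h k]

lemma tendsto_zero_of_mul_sq_norm_le {E : Type*} [SeminormedAddCommGroup E] {V : ℕ → E}
    {d : ℕ → ℝ} {c : ℝ} (hc : 0 < c) (hV : ∀ k, c * ‖V k‖ ^ 2 ≤ d k)
    (hd : Tendsto d atTop (𝓝 0)) : Tendsto V atTop (𝓝 0) := by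
  refine tendsto_zero_iff_norm_tendsto_zero.2 <|
    squeeze_zero_norm (fun k => ?_) (by simpa using (hd.div_const c).sqrt)
  rw [norm_norm, ← abs_norm]
  exact Real.abs_le_sqrt ((le_div_iff₀' hc).2 (hV k))

lemma tendsto_of_forall_tendsto_comp_sub {α : Type*} [TopologicalSpace α] {F : ℕ → α}
    {ℓ : ℕ → ℕ} {m : ℕ} {l : α} (hℓ : ∀ k, k - m ≤ ℓ k ∧ ℓ k ≤ k)
    (h : ∀ j, Tendsto (fun k => F (ℓ k - j)) atTop (𝓝 l)) : Tendsto F atTop (𝓝 l) := by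
  intro s hs
  have hall : ∀ᶠ k in atTop, ∀ j ∈ Finset.range (m + 1), F (ℓ k - j) ∈ s :=
    (Finset.eventually_all _).2 fun j _ => h j hs
  obtain ⟨N, hN⟩ := eventually_atTop.1 hall
  refine eventually_atTop.2 ⟨N, fun k hk => ?_⟩
  obtain ⟨hlo, hhi⟩ := hℓ (k + m)
  have hmem := hN (k + m) (by omega) (ℓ (k + m) - k) (Finset.mem_range.2 (by omega))
  rwa [show ℓ (k + m) - (ℓ (k + m) - k) = k by omega] at hmem

/-- The reference value `max_{max(k-m,0) ≤ j ≤ k} F j` of a nonmonotone line search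
(truncated subtraction supplies the `max (k-m) 0`). -/
noncomputable def windowMax (F : ℕ → ℝ) (m k : ℕ) : ℝ :=
  (Finset.Icc (k - m) k).sup' (Finset.nonempty_Icc.mpr (Nat.sub_le k m)) F

section windowMax

variable {F d : ℕ → ℝ} {m : ℕ}

lemma le_windowMax {j k : ℕ} (hj : k - m ≤ j) (hjk : j ≤ k) : F j ≤ windowMax F m k :=
  Finset.le_sup' F (Finset.mem_Icc.2 ⟨hj, hjk⟩)

lemma exists_windowMax_eq (k : ℕ) : ∃ j, (k - m ≤ j ∧ j ≤ k) ∧ windowMax F m k = F j := by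
  obtain ⟨j, hj, hmax⟩ := Finset.exists_mem_eq_sup' (Finset.nonempty_Icc.mpr (Nat.sub_le k m)) F
  exact ⟨j, Finset.mem_Icc.1 hj, hmax⟩

lemma antitone_windowMax (hdec : ∀ k, F (k + 1) ≤ windowMax F m k) :
    Antitone (windowMax F m) := by
  refine antitone_nat_of_succ_le fun k => Finset.sup'_le _ _ fun j hj => ?_
  obtain ⟨hlo, hhi⟩ := Finset.mem_Icc.1 hj
  rcases hhi.eq_or_lt with rfl | hlt
  · exact hdec k
  · exact le_windowMax (by omega) (by omega)

lemma tendsto_windowMax (hF : BddBelow (Set.range F)) (hdec : ∀ k, F (k + 1) ≤ windowMax F m k) :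
    Tendsto (windowMax F m) atTop (𝓝 (⨅ k, windowMax F m k)) := by
  obtain ⟨b, hb⟩ := hF
  refine tendsto_atTop_ciInf (antitone_windowMax hdec) ⟨b, ?_⟩
  rintro _ ⟨k, rfl⟩
  exact (hb ⟨k, rfl⟩).trans (le_windowMax (Nat.sub_le k m) le_rfl)

lemma tendsto_comp_of_nonmonotone_descent {C l : ℝ} (hd : 0 ≤ d)
    (hdec : ∀ k, F (k + 1) ≤ windowMax F m k - d k) (hstep : ∀ k, (F (k + 1) - F k) ^ 2 ≤ C * d k)
    (hM : Tendsto (windowMax F m) atTop (𝓝 l)) {u : ℕ → ℕ} (hu : Tendsto u atTop atTop)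
    (hFu : Tendsto (fun k => F (u k + 1)) atTop (𝓝 l)) :
    Tendsto (fun k => d (u k)) atTop (𝓝 0) ∧ Tendsto (fun k => F (u k)) atTop (𝓝 l) := by
  have hdu : Tendsto (fun k => d (u k)) atTop (𝓝 0) := by
    refine tendsto_of_tendsto_of_tendsto_of_le_of_le tendsto_const_nhds
      (h := fun k => windowMax F m (u k) - F (u k + 1)) ?_ (fun k => hd (u k))
      fun k => by linarith [hdec (u k)]
    simpa using (hM.comp hu).sub hFu
  have hsqrt : Tendsto (fun k => √(C * d (u k))) atTop (𝓝 0) := by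
    simpa using (hdu.const_mul C).sqrt
  have hdiff : Tendsto (fun k => F (u k) - F (u k + 1)) atTop (𝓝 0) :=
    squeeze_zero_norm (fun k => by
      rw [Real.norm_eq_abs, abs_sub_comm]; exact Real.abs_le_sqrt (hstep (u k))) hsqrt
  exact ⟨hdu, by simpa using hdiff.add hFu⟩

theorem tendsto_of_nonmonotone_descent {C : ℝ} (hF : BddBelow (Set.range F)) (hd : 0 ≤ d)
    (hdec : ∀ k, F (k + 1) ≤ windowMax F m k - d k) (hstep : ∀ k, (F (k + 1) - F k) ^ 2 ≤ C * d k) :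
    Tendsto d atTop (𝓝 0) ∧ ∃ l, Tendsto F atTop (𝓝 l) := by
  have hdec' : ∀ k, F (k + 1) ≤ windowMax F m k := fun k => (hdec k).trans (sub_le_self _ (hd k))
  set l := ⨅ k, windowMax F m k
  have hM := tendsto_windowMax hF hdec'
  choose ℓ hℓ hℓmax using fun k => exists_windowMax_eq (F := F) (m := m) k
  have hback : ∀ j, Tendsto (fun k => F (ℓ k - j)) atTop (𝓝 l) := by
    intro j
    induction j with
    | zero => simpa [← hℓmax] using hM
    | succ j ih =>
      have hu : Tendsto (fun k => ℓ k - (j + 1)) atTop atTop :=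
        tendsto_atTop_mono (fun k => by have := hℓ k; omega) (tendsto_sub_atTop_nat (m + j + 1))
      refine (tendsto_comp_of_nonmonotone_descent hd hdec hstep hM hu (ih.congr' ?_)).2
      filter_upwards [eventually_ge_atTop (m + j + 1)] with k hk
      have := hℓ k
      congr 1
      omega
  have hFlim := tendsto_of_forall_tendsto_comp_sub hℓ hback
  have hFsucc : Tendsto (fun k => F (k + 1)) atTop (𝓝 l) := (tendsto_add_atTop_iff_nat 1).2 hFlim
  exact ⟨(tendsto_comp_of_nonmonotone_descent hd hdec hstep hM tendsto_id hFsucc).1, l, hFlim⟩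

end windowMax

theorem stmt9_general {n r : ℕ} (f h : Matrix (Fin n) (Fin r) ℝ → ℝ)
    -- `f` is continuously differentiable with gradient function `g = ∇f`, which is `L`-Lipschitz
    (g : Matrix (Fin n) (Fin r) ℝ → Matrix (Fin n) (Fin r) ℝ)
    (Lf : Matrix (Fin n) (Fin r) ℝ → (Matrix (Fin n) (Fin r) ℝ →L[ℝ] ℝ))
    (hf : ∀ Z, HasFDerivAt f (Lf Z) Z) (hGrad : ∀ Z V, Lf Z V = tinner (g Z) V)
    (L Lh κ₁ κ₂ σ c₀ M₁ : ℝ) (m : ℕ)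
    (hLipg : ∀ A B, ‖g A - g B‖ ≤ L * ‖A - B‖)
    -- `h` is convex and `L_h`-Lipschitz
    (hLiph : ∀ A B, |h A - h B| ≤ Lh * ‖A - B‖)
    (hκ₁ : 0 < κ₁) (hσ : σ ∈ Set.Ioo (0 : ℝ) 1)
    (hc₀ : 0 < c₀)
    -- the sequences
    (X V : ℕ → Matrix (Fin n) (Fin r) ℝ) (α : ℕ → ℝ)
    (B : ℕ → (Matrix (Fin n) (Fin r) ℝ →ₗ[ℝ] Matrix (Fin n) (Fin r) ℝ))
    (hXSt : ∀ k, (X k)ᵀ * X k = 1)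
    (hVt : ∀ k, IsTangent (X k) (V k))
    (hα : ∀ k, α k ∈ Set.Icc c₀ 1)
    -- (i) uniform bounds on the quadratic form of `B_k` over `T_{X_k}`
    (hBbound : ∀ k W, IsTangent (X k) W →
      κ₁ * ‖W‖ ^ 2 ≤ tinner W (B k W) ∧ tinner W (B k W) ≤ κ₂ * ‖W‖ ^ 2)
    -- (iii)
    (hstep : ∀ k, ‖X (k + 1) - X k‖ ≤ M₁ * α k * ‖V k‖)
    -- (iv) nonmonotone sufficient decrease
    (hdec : ∀ k, f (X (k + 1)) + h (X (k + 1)) ≤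
      (Finset.Icc (k - m) k).sup' (Finset.nonempty_Icc.mpr (Nat.sub_le k m))
          (fun j => f (X j) + h (X j))
        - σ / 2 * α k * tinner (V k) (B k (V k))) :
    Tendsto V atTop (nhds 0) ∧
      ∃ l : ℝ, Tendsto (fun k => f (X k) + h (X k)) atTop (nhds l) := by
  set F : ℕ → ℝ := fun k => f (X k) + h (X k)
  set d : ℕ → ℝ := fun k => σ / 2 * α k * tinner (V k) (B k (V k))
  set c := σ / 2 * c₀ * κ₁
  set K := ‖g 0‖ + |L| * √r + |Lh|
  have hc : 0 < c := by have := hσ.1; positivity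
  have hXball : ∀ k, ‖X k‖ ≤ √r := fun k => (norm_eq_sqrt_of_transpose_mul_self_eq_one (hXSt k)).le
  have hFlip : ∀ j k, |F j - F k| ≤ K * ‖X j - X k‖ := fun j k =>
    abs_add_sub_le_of_hasFDerivAt_tinner hf hGrad hLipg hLiph (hXball j) (hXball k)
  have hbdd : BddBelow (Set.range F) := bddBelow_range_of_abs_sub_le fun k => (hFlip k 0).trans
    (mul_le_mul_of_nonneg_left (norm_sub_le_of_le (hXball k) (hXball 0)) (by positivity))
  have hdV : ∀ k, c * ‖V k‖ ^ 2 ≤ d k := fun k =>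
    mul_mul_sq_le_mul_mul (by linarith [hσ.1]) hc₀.le (hα k).1 hκ₁.le (hBbound k (V k) (hVt k)).1
  have hFstep : ∀ k, (F (k + 1) - F k) ^ 2 ≤ (K * M₁) ^ 2 / c * d k := by
    intro k
    obtain ⟨hcα, hα1⟩ := hα k
    have hΔF : |F (k + 1) - F k| ≤ K * M₁ * (α k * ‖V k‖) := by
      simpa only [mul_assoc] using
        (hFlip (k + 1) k).trans (mul_le_mul_of_nonneg_left (hstep k) (by positivity))
    have hαV : c * (α k * ‖V k‖) ^ 2 ≤ c * ‖V k‖ ^ 2 := by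
      rw [mul_pow]
      gcongr
      exact mul_le_of_le_one_left (sq_nonneg _) (pow_le_one₀ (hc₀.le.trans hcα) hα1)
    exact sq_le_div_mul_of_abs_le_mul hc hΔF (hαV.trans (hdV k))
  obtain ⟨hd, l, hF⟩ := tendsto_of_nonmonotone_descent hbdd
    (fun k => (mul_nonneg hc.le (sq_nonneg _)).trans (hdV k)) hdec hFstep
  exact ⟨tendsto_zero_of_mul_sq_norm_le hc hdV hd, l, hF⟩

theorem stmt9 {n r : ℕ} (f h : Matrix (Fin n) (Fin r) ℝ → ℝ)
    -- `f` is continuously differentiable with gradient function `g = ∇f`, which is `L`-Lipschitz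
    (g : Matrix (Fin n) (Fin r) ℝ → Matrix (Fin n) (Fin r) ℝ)
    (Lf : Matrix (Fin n) (Fin r) ℝ → (Matrix (Fin n) (Fin r) ℝ →L[ℝ] ℝ))
    (hf : ∀ Z, HasFDerivAt f (Lf Z) Z) (hGrad : ∀ Z V, Lf Z V = tinner (g Z) V)
    (L Lh κ₁ κ₂ σ c₀ M₁ : ℝ) (m : ℕ)
    (hLipg : ∀ A B, ‖g A - g B‖ ≤ L * ‖A - B‖)
    -- `h` is convex and `L_h`-Lipschitz
    (hconv : ConvexOn ℝ Set.univ h)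
    (hLiph : ∀ A B, |h A - h B| ≤ Lh * ‖A - B‖)
    (hκ₁ : 0 < κ₁) (hκ₁₂ : κ₁ ≤ κ₂) (hσ : σ ∈ Set.Ioo (0 : ℝ) 1)
    (hc₀ : 0 < c₀) (hM₁ : 0 < M₁)
    -- the sequences
    (X V : ℕ → Matrix (Fin n) (Fin r) ℝ) (α : ℕ → ℝ)
    (B : ℕ → (Matrix (Fin n) (Fin r) ℝ →ₗ[ℝ] Matrix (Fin n) (Fin r) ℝ))
    (hXSt : ∀ k, (X k)ᵀ * X k = 1)
    (hVt : ∀ k, IsTangent (X k) (V k))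
    (hα : ∀ k, α k ∈ Set.Icc c₀ 1)
    -- each `B_k` is self-adjoint and maps `T_{X_k}` into itself
    (hBsa : ∀ k U W, tinner U (B k W) = tinner (B k U) W)
    (hBtan : ∀ k W, IsTangent (X k) W → IsTangent (X k) (B k W))
    -- (i) uniform bounds on the quadratic form of `B_k` over `T_{X_k}`
    (hBbound : ∀ k W, IsTangent (X k) W →
      κ₁ * ‖W‖ ^ 2 ≤ tinner W (B k W) ∧ tinner W (B k W) ≤ κ₂ * ‖W‖ ^ 2)
    -- (ii) `V_k` minimizes `φ_k` over `T_{X_k}`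
    (hmin : ∀ k W, IsTangent (X k) W →
      tinner (g (X k)) (V k) + (1 / 2) * tinner (V k) (B k (V k)) + h (X k + V k) ≤
        tinner (g (X k)) W + (1 / 2) * tinner W (B k W) + h (X k + W))
    -- (iii)
    (hstep : ∀ k, ‖X (k + 1) - X k‖ ≤ M₁ * α k * ‖V k‖)
    -- (iv) nonmonotone sufficient decrease
    (hdec : ∀ k, f (X (k + 1)) + h (X (k + 1)) ≤
      (Finset.Icc (k - m) k).sup' (Finset.nonempty_Icc.mpr (Nat.sub_le k m))
          (fun j => f (X j) + h (X j))
        - σ / 2 * α k * tinner (V k) (B k (V k))) :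
    Tendsto V atTop (nhds 0) ∧
      ∃ l : ℝ, Tendsto (fun k => f (X k) + h (X k)) atTop (nhds l) :=
  stmt9_general f h g Lf hf hGrad L Lh κ₁ κ₂ σ c₀ M₁ m hLipg hLiph hκ₁ hσ hc₀ X V α B hXSt hVt hα
    hBbound hstep hdec
end
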